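/- arXiv:2106.13463 — 4 statements merged into one kernel-verified Lean document; each statement's English description precedes it below -/
import Mathlib

section
/- Let E be a finite set and P a row-stochastic matrix indexed by E that is irreducible (for all i, j ∈ E there exists n ≥ 1 with (Pⁿ)_{ij} > 0) and aperiodic (for every i ∈ E, the greatest common divisor of {n ≥ 1 : (Pⁿ)_{ii} > 0} equals 1). Let π be a probability vector on E that is invariant for P, i.e. Σ_i π_i P_{ij} = π_j for all j. Then for every probability vector μ on E and every j ∈ E, lim_{n→∞} (μᵀ Pⁿ)_j = π_j; equivalently, any Markov chain on E with transition matrix P converges in distribution to π for any initial distribution. -/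
/-!
Aperiodicity makes the return times to each state contain every large integer (they form
an additive monoid of gcd 1), and together with irreducibility this makes all entries of `Pⁿ`
positive for one `N`. A stochastic matrix whose entries are all at least `ε` shrinks the
oscillation `max g - min g` of every vector `g` by the factor `1 - |E| ε < 1`, so the
oscillation of the `j`-th column of `Pⁿ` tends to `0`. Both `(μᵀ Pⁿ)_j` and `π_j = (πᵀ Pⁿ)_j`
are averages of that column, hence their distance is at most its oscillation.
-/

open Filter Finset Matrix

section Primitivity

variable {n R : Type*} [Fintype n] [DecidableEq n] [Ring R] [LinearOrder R]
  [IsStrictOrderedRing R] {A : Matrix n n R}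

lemma pow_add_apply_pos (hA : ∀ i j, 0 ≤ A i j) {a b : ℕ} {i k j : n}
    (ha : 0 < (A ^ a) i k) (hb : 0 < (A ^ b) k j) : 0 < (A ^ (a + b)) i j := by
  rw [pow_add, mul_apply]
  exact Finset.sum_pos' (fun l _ => mul_nonneg (pow_apply_nonneg hA a i l)
    (pow_apply_nonneg hA b l j)) ⟨k, mem_univ k, mul_pos ha hb⟩

lemma eventually_pow_apply_self_pos (hA : ∀ i j, 0 ≤ A i j) (i : n)
    (haper : ∀ d : ℕ, (∀ m, 1 ≤ m → 0 < (A ^ m) i i → d ∣ m) → d = 1) :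
    ∀ᶠ m in atTop, 0 < (A ^ m) i i := by
  set S : Set ℕ := {m | 0 < (A ^ m) i i}
  have hgcd : Nat.setGcd S = 1 := haper _ fun m _ hm => Nat.setGcd_dvd_of_mem hm
  obtain ⟨N, hN⟩ := Nat.exists_mem_closure_of_ge S
  refine eventually_atTop.2 ⟨N, fun m hm => ?_⟩
  exact AddSubmonoid.closure_induction (motive := fun m _ => m ∈ S) (fun _ h => h)
    (by simp [S]) (fun _ _ _ _ => pow_add_apply_pos hA) (hN m hm (hgcd ▸ one_dvd m))

lemma eventually_pow_apply_pos (hA : ∀ i j, 0 ≤ A i j)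
    (hirr : ∀ i j, ∃ m, 0 < (A ^ m) i j)
    (haper : ∀ i, ∀ d : ℕ, (∀ m, 1 ≤ m → 0 < (A ^ m) i i → d ∣ m) → d = 1) :
    ∀ᶠ m in atTop, ∀ i j, 0 < (A ^ m) i j := by
  refine eventually_all.2 fun i => eventually_all.2 fun j => ?_
  obtain ⟨k, hk⟩ := hirr i j
  -- walk from `i` back to `i` in `m - k` steps, then to `j` in `k` steps
  filter_upwards [eventually_ge_atTop k,
    (tendsto_sub_atTop_nat k).eventually (eventually_pow_apply_self_pos hA i (haper i))]
    with m hkm hloop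
  simpa [Nat.sub_add_cancel hkm] using pow_add_apply_pos hA hloop hk

end Primitivity

section Oscillation

variable {E R : Type*} [Fintype E] [Nonempty E] [Field R] [LinearOrder R] [IsStrictOrderedRing R]

def osc (g : E → R) : R :=
  univ.sup' univ_nonempty g - univ.inf' univ_nonempty g

lemma osc_nonneg (g : E → R) : 0 ≤ osc g :=
  sub_nonneg.2 <| (inf'_le g (mem_univ (Classical.arbitrary E))).trans (le_sup' g (mem_univ _))

lemma dotProduct_mem_Icc {w : E → R} (hw : ∀ i, 0 ≤ w i) (hw1 : ∑ i, w i = 1) (g : E → R) :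
    w ⬝ᵥ g ∈ Set.Icc (univ.inf' univ_nonempty g) (univ.sup' univ_nonempty g) := by
  have hconst (c : R) : ∑ i, w i * c = c := by rw [← sum_mul, hw1, one_mul]
  constructor
  · calc univ.inf' univ_nonempty g = ∑ i, w i * univ.inf' univ_nonempty g := (hconst _).symm
      _ ≤ w ⬝ᵥ g := sum_le_sum fun i _ =>
          mul_le_mul_of_nonneg_left (inf'_le g (mem_univ i)) (hw i)
  · calc w ⬝ᵥ g ≤ ∑ i, w i * univ.sup' univ_nonempty g := sum_le_sum fun i _ =>
          mul_le_mul_of_nonneg_left (le_sup' g (mem_univ i)) (hw i)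
      _ = univ.sup' univ_nonempty g := hconst _

lemma abs_dotProduct_sub_dotProduct_le_osc {μ ν : E → R} (hμ : ∀ i, 0 ≤ μ i)
    (hμ1 : ∑ i, μ i = 1) (hν : ∀ i, 0 ≤ ν i) (hν1 : ∑ i, ν i = 1) (g : E → R) :
    |μ ⬝ᵥ g - ν ⬝ᵥ g| ≤ osc g := by
  obtain ⟨hμl, hμu⟩ := dotProduct_mem_Icc hμ hμ1 g
  obtain ⟨hνl, hνu⟩ := dotProduct_mem_Icc hν hν1 g
  exact abs_sub_le_iff.2 ⟨by unfold osc; linarith, by unfold osc; linarith⟩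

lemma osc_mulVec_le {Q : Matrix E E R} {ε : R} (hε : ∀ i k, ε ≤ Q i k)
    (hQ : ∀ i, ∑ k, Q i k = 1) (g : E → R) :
    osc (Q *ᵥ g) ≤ (1 - Fintype.card E * ε) * osc g := by
  obtain ⟨i₀, -, hi₀⟩ := exists_mem_eq_sup' univ_nonempty (Q *ᵥ g)
  obtain ⟨i₁, -, hi₁⟩ := exists_mem_eq_inf' univ_nonempty (Q *ᵥ g)
  set M := univ.sup' univ_nonempty g
  set m := univ.inf' univ_nonempty g
  have hgM (k : E) : g k ≤ M := le_sup' g (mem_univ k)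
  have hgm (k : E) : m ≤ g k := inf'_le g (mem_univ k)
  have hshift (i : E) : (Q *ᵥ g) i = ∑ k, Q i k * (g k - m) + m := by
    simp only [mul_sub, sum_sub_distrib, ← sum_mul, hQ, one_mul, sub_add_cancel]; rfl
  -- compare row `i₀` with the row `i₁` after lowering every entry of the latter to `ε`
  rw [osc, hi₀, hi₁, hshift, hshift, add_sub_add_right_eq_sub]
  calc ∑ k, Q i₀ k * (g k - m) - ∑ k, Q i₁ k * (g k - m)
      ≤ ∑ k, Q i₀ k * (g k - m) - ∑ k, ε * (g k - m) := by
        gcongr with k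
        · linarith [hgm k]
        · exact hε i₁ k
    _ = ∑ k, (Q i₀ k - ε) * (g k - m) := by rw [← sum_sub_distrib]; simp only [sub_mul]
    _ ≤ ∑ k, (Q i₀ k - ε) * (M - m) := by
        gcongr with k
        · linarith [hε i₀ k]
        · exact hgM k
    _ = (1 - Fintype.card E * ε) * osc g := by
        rw [← sum_mul, sum_sub_distrib, hQ, sum_const, card_univ, nsmul_eq_mul]; rfl

end Oscillation

lemma tendsto_osc_pow_mulVec {E : Type*} [Fintype E] [Nonempty E] [DecidableEq E]
    {Q : Matrix E E ℝ} (hQ : Q ∈ rowStochastic ℝ E) {N : ℕ} (hN : ∀ i j, 0 < (Q ^ N) i j)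
    (g : E → ℝ) :
    Tendsto (fun n => osc (Q ^ n *ᵥ g)) atTop (nhds 0) := by
  set s : ℕ → ℝ := fun n => osc (Q ^ n *ᵥ g)
  have hpow_rows (n : ℕ) (i : E) : ∑ k, (Q ^ n) i k = 1 :=
    sum_row_of_mem_rowStochastic (pow_mem hQ n) i
  obtain ⟨p, hp⟩ := Finite.exists_min fun p : E × E => (Q ^ N) p.1 p.2
  set ε := (Q ^ N) p.1 p.2
  set c := 1 - Fintype.card E * ε
  have hc : c < 1 := by
    have := mul_pos (Nat.cast_pos.2 (Fintype.card_pos (α := E))) (hN p.1 p.2); linarith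
  have hs_step (a n : ℕ) {δ : ℝ} (hδ : ∀ i k, δ ≤ (Q ^ a) i k) :
      s (n + a) ≤ (1 - Fintype.card E * δ) * s n := by
    have hpow : Q ^ (n + a) = Q ^ a * Q ^ n := by rw [← pow_add, add_comm]
    simpa only [s, hpow, mulVec_mulVec] using osc_mulVec_le hδ (hpow_rows a) (Q ^ n *ᵥ g)
  have hs_anti : Antitone s := antitone_nat_of_succ_le fun n => by
    simpa using hs_step 1 n (δ := 0) fun i k => by simpa using nonneg_of_mem_rowStochastic hQ
  have hlim := tendsto_atTop_ciInf hs_anti ⟨0, Set.forall_mem_range.2 fun n => osc_nonneg _⟩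
  set L := ⨅ n, s n
  have hL : L ≤ c * L :=
    le_of_tendsto_of_tendsto' ((tendsto_add_atTop_iff_nat N).2 hlim) (hlim.const_mul c)
      fun n => hs_step N n fun i k => hp (i, k)
  have hL0 : 0 ≤ L := le_ciInf fun n => osc_nonneg _
  have : L = 0 := by nlinarith
  rwa [this] at hlim

lemma vecMul_pow_eq_self {E R : Type*} [Fintype E] [DecidableEq E] [Semiring R]
    {P : Matrix E E R} {π : E → R} (hπ : π ᵥ* P = π) (n : ℕ) : π ᵥ* P ^ n = π := by
  induction n with
  | zero => simp
  | succ n ih => rw [pow_succ, ← vecMul_vecMul, ih, hπ]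

/-- An irreducible aperiodic row-stochastic matrix `P` on a finite set `E`
with invariant probability vector `π` satisfies: for every probability vector `μ` on `E` and
every `j`, `(μᵀ Pⁿ)_j → π_j` as `n → ∞`; i.e. any Markov chain with transition matrix `P`
converges in distribution to `π` for any initial distribution. -/
theorem irreducible_aperiodic_convergence
    {E : Type*} [Fintype E] [DecidableEq E]
    (P : Matrix E E ℝ) (π : E → ℝ)
    (hP_nonneg : ∀ i j, 0 ≤ P i j)
    (hP_rows : ∀ i, ∑ j, P i j = 1)
    (hirr : ∀ i j, ∃ n, 1 ≤ n ∧ 0 < (P ^ n) i j)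
    (haper : ∀ i, ∀ d : ℕ, (∀ n, 1 ≤ n → 0 < (P ^ n) i i → d ∣ n) → d = 1)
    (hπ_nonneg : ∀ i, 0 ≤ π i)
    (hπ_sum : ∑ i, π i = 1)
    (hπ_inv : ∀ j, ∑ i, π i * P i j = π j) :
    ∀ μ : E → ℝ, (∀ i, 0 ≤ μ i) → ∑ i, μ i = 1 →
      ∀ j, Tendsto (fun n : ℕ => ∑ i, μ i * (P ^ n) i j) atTop (nhds (π j)) := by
  intro μ hμ_nonneg hμ_sum j
  have : Nonempty E :=
    univ_nonempty_iff.1 (nonempty_of_sum_ne_zero (hπ_sum.symm ▸ one_ne_zero))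
  have hP : P ∈ rowStochastic ℝ E := mem_rowStochastic_iff_sum.2 ⟨hP_nonneg, hP_rows⟩
  obtain ⟨N, hN⟩ := (eventually_pow_apply_pos hP_nonneg
    (fun i j => (hirr i j).imp fun _ => And.right) haper).exists
  have hπ_col (n : ℕ) : π ⬝ᵥ (P ^ n *ᵥ Pi.single j 1) = π j := by
    rw [dotProduct_mulVec, vecMul_pow_eq_self (funext hπ_inv), dotProduct_single_one]
  refine tendsto_iff_norm_sub_tendsto_zero.2 <| squeeze_zero (fun _ => norm_nonneg _)
    (fun n => ?_) (tendsto_osc_pow_mulVec hP hN (Pi.single j 1))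
  have hμ_col : μ ⬝ᵥ (P ^ n *ᵥ Pi.single j 1) = ∑ i, μ i * (P ^ n) i j := by
    rw [mulVec_single_one]; rfl
  rw [Real.norm_eq_abs, ← hπ_col n, ← hμ_col]
  exact abs_dotProduct_sub_dotProduct_le_osc hμ_nonneg hμ_sum hπ_nonneg hπ_sum
    (P ^ n *ᵥ Pi.single j 1)
end

section
/- Let Δ be a real d×d matrix, let T > 0 and C ≥ 0, and let (Q_k)_{k≥1} be a sequence of real d×d matrices such that ‖Q_k − (Id − (T/k)·Δ)‖ ≤ C/k² for all k ≥ 1, where ‖·‖ is a submultiplicative matrix norm and Id is the identity matrix. Then the matrix powers Q_k^k converge to the matrix exponential exp(−T·Δ) as k → ∞. -/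
/-!
With `P k = exp (k⁻¹ • x)` we have `P k ^ k = exp x`. Both `Q k` and `P k` are
`1 + k⁻¹ • x + o(1/k)` (for `P k` because `exp` has derivative `1` at `0`), so
`‖Q k - P k‖ = o(1/k)` and eventually both have norm at most `1 + c/k` with `c = ‖x‖ + 1`.
Telescoping gives `‖Q k ^ k - P k ^ k‖ ≤ k (1 + c/k) ^ (k-1) ‖Q k - P k‖ ≤ e^c · k ‖Q k - P k‖ → 0`.
The hypothesis on `Q k`, stated for an arbitrary norm on matrices, transfers to the `L^∞` operator
norm because all norms on a finite-dimensional space are equivalent.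
-/

open Filter Topology Asymptotics NormedSpace

theorem one_add_div_pow_pred_le_exp {c : ℝ} (hc : 0 ≤ c) (k : ℕ) :
    (1 + c / k) ^ (k - 1) ≤ Real.exp c :=
  calc (1 + c / k) ^ (k - 1) ≤ (1 + c / k) ^ k :=
        pow_le_pow_right₀ (le_add_of_nonneg_right (by positivity)) (Nat.sub_le k 1)
    _ ≤ Real.exp c := by
        simpa [sub_eq_add_neg, neg_div] using
          Real.one_sub_div_pow_le_exp_neg (n := k) (t := -c) (by linarith [k.cast_nonneg (α := ℝ)])

theorem Seminorm.exists_norm_le_mul_of_finiteDimensional {E : Type*} [NormedAddCommGroup E]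
    [NormedSpace ℝ E] [FiniteDimensional ℝ E] (p : Seminorm ℝ E) (hp : ∀ v, p v = 0 → v = 0) :
    ∃ c > 0, ∀ v, ‖v‖ ≤ c * p v := by
  rcases subsingleton_or_nontrivial E with _ | _
  · exact ⟨1, one_pos, fun v => by simp [Subsingleton.elim v 0]⟩
  obtain ⟨u, hu, hmin⟩ := (isCompact_sphere (0 : E) 1).exists_isMinOn
    (NormedSpace.sphere_nonempty.2 zero_le_one) p.convexOn.locallyLipschitz.continuous.continuousOn
  have hu1 : ‖u‖ = 1 := mem_sphere_zero_iff_norm.1 hu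
  have hpu : 0 < p u := (apply_nonneg p u).lt_of_ne fun h => by
    simp [hp u h.symm] at hu1
  refine ⟨(p u)⁻¹, inv_pos.2 hpu, fun v => ?_⟩
  rcases eq_or_ne v 0 with rfl | hv
  · simp
  have hv' : 0 < ‖v‖ := norm_pos_iff.2 hv
  have hmin_v : p u ≤ ‖v‖⁻¹ * p v := by
    simpa [map_smul_eq_mul, abs_of_pos hv'] using
      hmin (by simp [norm_smul, hv'.ne'] : ‖v‖⁻¹ • v ∈ Metric.sphere (0 : E) 1)
  rw [inv_mul_eq_div, le_div_iff₀ hpu]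
  rwa [le_inv_mul_iff₀ hv'] at hmin_v

section BanachAlgebra

variable {𝔸 : Type*} [NormedRing 𝔸]

theorem norm_pow_sub_pow_le [NormOneClass 𝔸] {a b : 𝔸} {M : ℝ} (ha : ‖a‖ ≤ M) (hb : ‖b‖ ≤ M)
    (n : ℕ) : ‖a ^ n - b ^ n‖ ≤ n * M ^ (n - 1) * ‖a - b‖ := by
  induction n with
  | zero => simp
  | succ n ih =>
    have hM : 0 ≤ M := (norm_nonneg a).trans ha
    have hMn : M * (n * M ^ (n - 1)) = n * M ^ n := by
      rcases Nat.eq_zero_or_pos n with rfl | hn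
      · simp
      · rw [mul_left_comm, mul_pow_sub_one hn.ne']
    calc ‖a ^ (n + 1) - b ^ (n + 1)‖ = ‖a * (a ^ n - b ^ n) + (a - b) * b ^ n‖ := by
          rw [mul_sub, sub_mul, sub_add_sub_cancel, pow_succ', pow_succ']
      _ ≤ ‖a‖ * ‖a ^ n - b ^ n‖ + ‖a - b‖ * ‖b‖ ^ n :=
          (norm_add_le _ _).trans <| add_le_add (norm_mul_le _ _) <|
            (norm_mul_le _ _).trans <| by gcongr; exact norm_pow_le b n
      _ ≤ M * (n * M ^ (n - 1) * ‖a - b‖) + ‖a - b‖ * M ^ n := by gcongr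
      _ = (n + 1 : ℕ) * M ^ (n + 1 - 1) * ‖a - b‖ := by
          rw [← mul_assoc, hMn, Nat.add_sub_cancel]; push_cast; ring

theorem tendsto_pow_sub_pow_of_isLittleO [NormOneClass 𝔸] {a b : ℕ → 𝔸} {c : ℝ} (hc : 0 ≤ c)
    (ha : ∀ᶠ k in atTop, ‖a k‖ ≤ 1 + c / k) (hb : ∀ᶠ k in atTop, ‖b k‖ ≤ 1 + c / k)
    (hab : (fun k => a k - b k) =o[atTop] fun k => (k : ℝ)⁻¹) :
    Tendsto (fun k => a k ^ k - b k ^ k) atTop (𝓝 0) := by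
  have hlim : Tendsto (fun k : ℕ => Real.exp c * (k * ‖a k - b k‖)) atTop (𝓝 0) := by
    simpa using hab.norm_left.tendsto_inv_smul_nhds_zero.const_mul (Real.exp c)
  refine squeeze_zero_norm' ?_ hlim
  filter_upwards [ha, hb] with k hak hbk
  calc ‖a k ^ k - b k ^ k‖ ≤ k * (1 + c / k) ^ (k - 1) * ‖a k - b k‖ :=
        norm_pow_sub_pow_le hak hbk k
    _ ≤ k * Real.exp c * ‖a k - b k‖ := by gcongr; exact one_add_div_pow_pred_le_exp hc k
    _ = Real.exp c * (k * ‖a k - b k‖) := by ring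

variable [NormedAlgebra ℝ 𝔸]

theorem isLittleO_exp_inv_smul_sub_one_add_smul [CompleteSpace 𝔸] (x : 𝔸) :
    (fun k : ℕ => exp ((k : ℝ)⁻¹ • x) - (1 + (k : ℝ)⁻¹ • x)) =o[atTop] fun k => (k : ℝ)⁻¹ := by
  have hsmul : Tendsto (fun k : ℕ => (k : ℝ)⁻¹ • x) atTop (𝓝 0) := by
    simpa using (tendsto_inv_atTop_zero.comp (tendsto_natCast_atTop_atTop (R := ℝ))).smul_const x
  have hexp := hasFDerivAt_iff_isLittleO_nhds_zero.1 (hasFDerivAt_exp_zero (𝕂 := ℝ) (𝔸 := 𝔸))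
  refine ((hexp.comp_tendsto hsmul).congr_left fun k => ?_).trans_isBigO ?_
  · simp [exp_zero, sub_sub]
  · exact isBigO_of_le' (c := ‖x‖) _ fun k => by simp [norm_smul, mul_comm]

theorem eventually_norm_le_of_isLittleO_sub_one_add_smul [NormOneClass 𝔸] {x : 𝔸} {a : ℕ → 𝔸}
    (ha : (fun k => a k - (1 + (k : ℝ)⁻¹ • x)) =o[atTop] fun k => (k : ℝ)⁻¹) :
    ∀ᶠ k in atTop, ‖a k‖ ≤ 1 + (‖x‖ + 1) / k := by
  filter_upwards [ha.bound one_pos] with k hk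
  calc ‖a k‖ = ‖(1 + (k : ℝ)⁻¹ • x) + (a k - (1 + (k : ℝ)⁻¹ • x))‖ := by
        rw [add_sub_cancel]
    _ ≤ 1 + (k : ℝ)⁻¹ * ‖x‖ + (k : ℝ)⁻¹ := by
        refine (norm_add_le _ _).trans (add_le_add ((norm_add_le _ _).trans ?_) ?_)
        · simp [norm_smul]
        · simpa using hk
    _ = 1 + (‖x‖ + 1) / k := by ring

theorem tendsto_pow_exp_of_isLittleO_sub_one_add_smul [NormOneClass 𝔸] [CompleteSpace 𝔸]
    {x : 𝔸} {Q : ℕ → 𝔸}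
    (hQ : (fun k => Q k - (1 + (k : ℝ)⁻¹ • x)) =o[atTop] fun k => (k : ℝ)⁻¹) :
    Tendsto (fun k => Q k ^ k) atTop (𝓝 (exp x)) := by
  have hP := isLittleO_exp_inv_smul_sub_one_add_smul x
  have hPk : ∀ k : ℕ, 0 < k → exp ((k : ℝ)⁻¹ • x) ^ k = exp x := fun k hk => by
    let : NormedAlgebra ℚ 𝔸 := .restrictScalars ℚ ℝ 𝔸
    rw [← exp_nsmul, ← Nat.cast_smul_eq_nsmul ℝ, smul_inv_smul₀ (Nat.cast_ne_zero.2 hk.ne')]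
  have hdiff := tendsto_pow_sub_pow_of_isLittleO (add_nonneg (norm_nonneg x) zero_le_one)
    (eventually_norm_le_of_isLittleO_sub_one_add_smul hQ)
    (eventually_norm_le_of_isLittleO_sub_one_add_smul hP)
    ((hQ.sub hP).congr_left fun k => by abel)
  have hlim := hdiff.add_const (exp x)
  rw [zero_add] at hlim
  refine hlim.congr' ?_
  filter_upwards [eventually_gt_atTop 0] with k hk
  rw [hPk k hk, sub_add_cancel]

end BanachAlgebra

theorem powers_tendsto_matrix_exp_general
    (d : ℕ)
    (Δ : Matrix (Fin d) (Fin d) ℝ)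
    (T : ℝ) (C : ℝ)
    (nrm : Matrix (Fin d) (Fin d) ℝ → ℝ)
    (hnrm_eq_zero : ∀ A, nrm A = 0 ↔ A = 0)
    (hnrm_add : ∀ A B, nrm (A + B) ≤ nrm A + nrm B)
    (hnrm_smul : ∀ (c : ℝ) A, nrm (c • A) = |c| * nrm A)
    (Q : ℕ → Matrix (Fin d) (Fin d) ℝ)
    (hQ : ∀ k : ℕ, 1 ≤ k → nrm (Q k - (1 - (T / (k : ℝ)) • Δ)) ≤ C / (k : ℝ) ^ 2) :
    Tendsto (fun k : ℕ => Q k ^ k) atTop (nhds (NormedSpace.exp (-(T • Δ)))) := by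
  cases isEmpty_or_nonempty (Fin d)
  · exact tendsto_const_nhds.congr fun k => Subsingleton.elim _ _
  -- `‖1‖ = 1` for this norm needs `d > 0`, hence the split above.
  let := Matrix.linftyOpNormedRing (n := Fin d) (α := ℝ)
  let := Matrix.linftyOpNormedAlgebra (n := Fin d) (R := ℝ) (α := ℝ)
  obtain ⟨c, c_pos, hc⟩ := (Seminorm.of nrm hnrm_add fun r A => by
    rw [hnrm_smul, Real.norm_eq_abs]).exists_norm_le_mul_of_finiteDimensional
      fun A => (hnrm_eq_zero A).1
  refine tendsto_pow_exp_of_isLittleO_sub_one_add_smul ?_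
  have hsq : (fun k : ℕ => ((k : ℝ) ^ 2)⁻¹) =o[atTop] fun k => (k : ℝ)⁻¹ := by
    simpa [sq] using (isLittleO_one_iff ℝ).2
      (tendsto_inv_atTop_zero.comp (tendsto_natCast_atTop_atTop (R := ℝ)))
        |>.mul_isBigO (isBigO_refl (fun k : ℕ => (k : ℝ)⁻¹) atTop)
  refine IsBigO.trans_isLittleO (IsBigO.of_bound (c * C) ?_) hsq
  filter_upwards [eventually_ge_atTop 1] with k hk
  have hstep : (1 : Matrix (Fin d) (Fin d) ℝ) + (k : ℝ)⁻¹ • -(T • Δ) = 1 - (T / k) • Δ := by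
    rw [smul_neg, smul_smul, inv_mul_eq_div, sub_eq_add_neg]
  rw [hstep, norm_inv, norm_pow, Real.norm_natCast, mul_assoc, ← div_eq_mul_inv]
  exact (hc _).trans (mul_le_mul_of_nonneg_left (hQ k hk) c_pos.le)

/-- Let `Δ` be a real `d × d` matrix, `T > 0`, `C ≥ 0`, and `(Q_k)_{k ≥ 1}` a
sequence of real `d × d` matrices with `‖Q_k - (Id - (T/k)·Δ)‖ ≤ C/k²` for a submultiplicative
matrix norm `‖·‖`.  Then `Q_k ^ k → exp (-T·Δ)` as `k → ∞`. -/
theorem powers_tendsto_matrix_exp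
    (d : ℕ)
    (Δ : Matrix (Fin d) (Fin d) ℝ)
    (T : ℝ) (hT : 0 < T) (C : ℝ) (hC : 0 ≤ C)
    (nrm : Matrix (Fin d) (Fin d) ℝ → ℝ)
    (hnrm_nonneg : ∀ A, 0 ≤ nrm A)
    (hnrm_eq_zero : ∀ A, nrm A = 0 ↔ A = 0)
    (hnrm_add : ∀ A B, nrm (A + B) ≤ nrm A + nrm B)
    (hnrm_smul : ∀ (c : ℝ) A, nrm (c • A) = |c| * nrm A)
    (hnrm_mul : ∀ A B, nrm (A * B) ≤ nrm A * nrm B)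
    (Q : ℕ → Matrix (Fin d) (Fin d) ℝ)
    (hQ : ∀ k : ℕ, 1 ≤ k → nrm (Q k - (1 - (T / (k : ℝ)) • Δ)) ≤ C / (k : ℝ) ^ 2) :
    Tendsto (fun k : ℕ => Q k ^ k) atTop (nhds (NormedSpace.exp (-(T • Δ)))) :=
  powers_tendsto_matrix_exp_general d Δ T C nrm hnrm_eq_zero hnrm_add hnrm_smul Q hQ
end

section
/- In the discrete stochastic SIR model, for every k ∈ ℕ the conditional variance of the number of infectious individuals satisfies, almost surely: Var(I_{k+1} | 𝓕_k) = S_k·(1 − e^{−λ I_k h})·e^{−λ I_k h} + I_k·(1 − e^{−γh})·e^{−γh}, where Var(Z | 𝓕_k) := 𝔼[Z² | 𝓕_k] − (𝔼[Z | 𝓕_k])². -/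
/-!
Conditionally on `𝓕_k`, the indicators `(X_j, Y_j)_{j<N}` are independent with
`P(X_j = 0) = e := exp(-λ I_k h)` and `P(Y_j = 0) = f := exp(-γ h)`, and
`I_{k+1} = ∑_{j<I_k} (1 - Y_j) + ∑_{j<S_k} X_j` is a sum of one function of each pair
`(X_j, Y_j)` with `𝓕_k`-measurable coefficients. Splitting `I_{k+1}` and `I_{k+1}²` along the
finitely many values of the configuration `(X_j, Y_j)_{j<N}` pulls these coefficients out of the
conditional expectation, so the conditional variance is the variance of a sum of independent terms
under a product weight, i.e. the sum of their variances: `(1-e)e` for each of the `S_k` infection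
trials and `(1-f)f` for each of the `I_k` recovery trials.
-/

open MeasureTheory ProbabilityTheory Filter Real

/-- The filtration `𝓕_k = σ((S_j, I_j) : j ≤ k)` generated by the susceptible and infectious
counts up to time `k`. -/
def sirFiltration {Ω : Type*} (S I : ℕ → Ω → ℕ) (k : ℕ) : MeasurableSpace Ω :=
  ⨆ j ∈ Finset.range (k + 1),
    MeasurableSpace.comap (fun ω => (S j ω, I j ω)) inferInstance

/-- The discrete stochastic SIR model on one node with total population `N`, time step `h > 0`
and parameters `λ ≥ 0` (infection), `γ > 0` (recovery).  `S, I, R` are the susceptible,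
infectious and recovered counts; `X k i` and `Y k i` are the `{0,1}`-valued infection and
recovery indicators used in the step from time `k` to `k+1`.  Conditionally on
`𝓕_k = σ((S_j, I_j) : j ≤ k)`, the combined family `(X k i)_i, (Y k i)_i` is independent,
each `X k i` being Bernoulli of parameter `1 - e^{-λ I_k h}` and each `Y k i` Bernoulli of
parameter `1 - e^{-γ h}`; this is expressed by the product form of the conditional
probability of every joint configuration of values.  The initial values are deterministic. -/
def IsSIRModel {Ω : Type*} [MeasurableSpace Ω] (μ : Measure Ω)
    (N : ℕ) (h lam gam : ℝ)
    (S I R : ℕ → Ω → ℕ) (X Y : ℕ → ℕ → Ω → ℕ) : Prop :=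
  IsProbabilityMeasure μ ∧
  0 < h ∧ 0 ≤ lam ∧ 0 < gam ∧
  (∀ k ω, S k ω + I k ω + R k ω = N) ∧
  (∀ k i ω, X k i ω ≤ 1) ∧
  (∀ k i ω, Y k i ω ≤ 1) ∧
  (∀ k, Measurable (S k)) ∧ (∀ k, Measurable (I k)) ∧ (∀ k, Measurable (R k)) ∧
  (∀ k i, Measurable (X k i)) ∧ (∀ k i, Measurable (Y k i)) ∧
  (∀ ω ω', S 0 ω = S 0 ω' ∧ I 0 ω = I 0 ω' ∧ R 0 ω = R 0 ω') ∧
  (∀ k ω, S (k + 1) ω + (∑ i ∈ Finset.range (S k ω), X k i ω) = S k ω) ∧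
  (∀ k ω, I (k + 1) ω + (∑ i ∈ Finset.range (I k ω), Y k i ω)
      = I k ω + ∑ i ∈ Finset.range (S k ω), X k i ω) ∧
  (∀ k ω, R (k + 1) ω = R k ω + ∑ i ∈ Finset.range (I k ω), Y k i ω) ∧
  (∀ k : ℕ, ∀ a b : ℕ → ℕ, (∀ i, a i ≤ 1) → (∀ i, b i ≤ 1) →
    μ[Set.indicator {ω | ∀ i < N, X k i ω = a i ∧ Y k i ω = b i} (fun _ => (1 : ℝ))
        | sirFiltration S I k]
      =ᵐ[μ] fun ω =>
        (∏ i ∈ Finset.range N,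
          (if a i = 1 then 1 - exp (-(lam * (I k ω : ℝ) * h))
            else exp (-(lam * (I k ω : ℝ) * h)))) *
        (∏ i ∈ Finset.range N,
          (if b i = 1 then 1 - exp (-(gam * h)) else exp (-(gam * h)))))

section ProductWeight

variable {ι V : Type*} [Fintype ι] [DecidableEq ι] [Fintype V] (w : V → ℝ)

def piExpect (f : (ι → V) → ℝ) : ℝ :=
  ∑ c, f c * ∏ j, w (c j)

theorem piExpect_prod (g : ι → V → ℝ) :
    piExpect w (fun c => ∏ j, g j (c j)) = ∏ j, ∑ v, g j v * w v := by
  simp only [piExpect, Fintype.prod_sum, Finset.prod_mul_distrib]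

theorem piExpect_sum {κ : Type*} (s : Finset κ) (f : κ → (ι → V) → ℝ) :
    piExpect w (fun c => ∑ a ∈ s, f a c) = ∑ a ∈ s, piExpect w (f a) := by
  simp only [piExpect, Finset.sum_mul]
  exact Finset.sum_comm

theorem piExpect_apply (hw : ∑ v, w v = 1) (g : V → ℝ) (i : ι) :
    piExpect w (fun c => g (c i)) = ∑ v, g v * w v := by
  simpa [ite_apply, apply_ite, hw, Finset.prod_ite_eq'] using
    piExpect_prod w (fun j => if j = i then g else 1)

theorem piExpect_apply_mul_apply (hw : ∑ v, w v = 1) (g g' : V → ℝ) {i j : ι} (hij : i ≠ j) :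
    piExpect w (fun c => g (c i) * g' (c j)) = (∑ v, g v * w v) * ∑ v, g' v * w v := by
  have hrest : ∀ l, l ≠ i ∧ l ≠ j → (if l = i then g else if l = j then g' else 1) = 1 :=
    fun l hl => by simp [hl.1, hl.2]
  convert piExpect_prod w (fun l => if l = i then g else if l = j then g' else 1) using 1
  · congr 1
    funext c
    rw [Fintype.prod_eq_mul i j hij fun l hl => by simp [hrest l hl]]
    simp [hij.symm]
  · rw [Fintype.prod_eq_mul i j hij fun l hl => by simp [hrest l hl, hw]]
    simp [hij.symm]

def weightedVar (φ : V → ℝ) : ℝ :=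
  ∑ v, φ v ^ 2 * w v - (∑ v, φ v * w v) ^ 2

theorem piExpect_sq_sub_sq_eq_sum_weightedVar (hw : ∑ v, w v = 1) (φ : ι → V → ℝ) :
    piExpect w (fun c => (∑ i, φ i (c i)) ^ 2) - piExpect w (fun c => ∑ i, φ i (c i)) ^ 2
      = ∑ i, weightedVar w (φ i) := by
  set m := fun i => ∑ v, φ i v * w v
  have hcov : ∀ i j, piExpect w (fun c => φ i (c i) * φ j (c j)) - m i * m j
      = if i = j then ∑ v, φ i v ^ 2 * w v - m i ^ 2 else 0 := by
    intro i j
    split_ifs with hij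
    · subst hij
      simp only [← sq]
      rw [piExpect_apply w hw (fun v => φ i v ^ 2)]
    · rw [piExpect_apply_mul_apply w hw _ _ hij, sub_self]
  calc _ = ∑ i, ∑ j, (piExpect w (fun c => φ i (c i) * φ j (c j)) - m i * m j) := by
        simp only [sq, Finset.sum_mul_sum, piExpect_sum, piExpect_apply w hw,
          Finset.sum_sub_distrib, m]
    _ = _ := by simp [hcov, m, weightedVar]

end ProductWeight

theorem condExp_eq_sum_mul_condExp_indicator {Ω ι : Type*} {m mΩ : MeasurableSpace Ω}
    {μ : Measure Ω} [IsFiniteMeasure μ] [Fintype ι] [MeasurableSpace ι]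
    [MeasurableSingletonClass ι] {κ : Ω → ι} (hκ : Measurable κ) {H : ι → Ω → ℝ}
    (hH : ∀ c, StronglyMeasurable[m] (H c)) {Z : Ω → ℝ} (hZ : Integrable Z μ)
    (hZH : ∀ ω, Z ω = H (κ ω) ω) :
    μ[Z | m] =ᵐ[μ] fun ω => ∑ c, H c ω * μ[(κ ⁻¹' {c}).indicator 1 | m] ω := by
  have hA : ∀ c, MeasurableSet (κ ⁻¹' {c}) := fun c => hκ (measurableSet_singleton c)
  have hpiece : ∀ c, (κ ⁻¹' {c}).indicator Z = H c * (κ ⁻¹' {c}).indicator 1 := by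
    intro c
    ext ω
    by_cases hc : κ ω = c
    · subst hc
      simp [hZH ω]
    · simp [hc]
  have hsum : Z = ∑ c, (κ ⁻¹' {c}).indicator Z := by
    classical
    ext ω
    simp [Finset.sum_apply, Set.indicator_apply, eq_comm]
  calc μ[Z | m] =ᵐ[μ] ∑ c, μ[(κ ⁻¹' {c}).indicator Z | m] := by
        nth_rewrite 1 [hsum]
        exact condExp_finsetSum (fun c _ => hZ.indicator (hA c)) m
    _ =ᵐ[μ] ∑ c, H c * μ[(κ ⁻¹' {c}).indicator 1 | m] := by
        refine eventuallyEq_sum fun c _ => ?_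
        rw [hpiece c]
        refine condExp_mul_of_stronglyMeasurable_left (hH c) ?_
          ((integrable_const 1).indicator (hA c))
        rw [← hpiece c]
        exact hZ.indicator (hA c)
    _ = fun ω => ∑ c, H c ω * μ[(κ ⁻¹' {c}).indicator 1 | m] ω := by
        ext ω
        simp [Finset.sum_apply]

theorem sum_range_eq_sum_fin_ite {M : Type*} [AddCommMonoid M] {t N : ℕ} (ht : t ≤ N)
    (f : ℕ → M) : ∑ i ∈ Finset.range t, f i = ∑ j : Fin N, if (j : ℕ) < t then f j else 0 := by
  rw [Fin.sum_univ_eq_sum_range (fun i => if i < t then f i else 0), ← Finset.sum_filter]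
  congr 1
  ext i
  simp only [Finset.mem_range, Finset.mem_filter]
  omega

theorem sum_fin_ite_lt_const {t N : ℕ} (ht : t ≤ N) (C : ℝ) :
    ∑ j : Fin N, (if (j : ℕ) < t then C else 0) = t * C := by
  simpa using (sum_range_eq_sum_fin_ite ht fun _ => C).symm

theorem eq_toNat_iff_decide_eq {n : ℕ} (hn : n ≤ 1) (b : Bool) :
    n = b.toNat ↔ decide (n = 1) = b := by
  cases b
  · simp only [Bool.toNat_false, decide_eq_false_iff_not]
    omega
  · simp only [Bool.toNat_true, decide_eq_true_eq]

theorem integrable_comp_of_forall_le {Ω : Type*} [MeasurableSpace Ω] {μ : Measure Ω}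
    [IsFiniteMeasure μ] {Z : Ω → ℕ} (hZ : Measurable Z) {N : ℕ} (hZN : ∀ ω, Z ω ≤ N)
    (g : ℕ → ℝ) : Integrable (fun ω => g (Z ω)) μ :=
  .of_bound ((measurable_of_countable g).comp hZ).aestronglyMeasurable
    (∑ n ∈ Finset.range (N + 1), ‖g n‖) (ae_of_all _ fun ω =>
      Finset.single_le_sum (f := fun n => ‖g n‖) (fun _ _ => norm_nonneg _)
        (Finset.mem_range.2 (Nat.lt_succ_of_le (hZN ω))))

theorem measurable_pair_sirFiltration {Ω : Type*} (S I : ℕ → Ω → ℕ) (k : ℕ) :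
    Measurable[sirFiltration S I k] fun ω => (S k ω, I k ω) :=
  measurable_iff_comap_le.2 (le_iSup₂_of_le k (Finset.self_mem_range_succ k) le_rfl)

section Configurations

variable {Ω : Type*} {N : ℕ}

def bitSeq (c : Fin N → Bool) (i : ℕ) : ℕ :=
  if hi : i < N then (c ⟨i, hi⟩).toNat else 0

theorem bitSeq_le_one (c : Fin N → Bool) (i : ℕ) : bitSeq c i ≤ 1 := by
  unfold bitSeq
  split
  · exact Bool.toNat_le _
  · exact zero_le_one

def sirConfig (N : ℕ) (X Y : ℕ → Ω → ℕ) (ω : Ω) : Fin N → Bool × Bool :=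
  fun j => (decide (X j ω = 1), decide (Y j ω = 1))

theorem setOf_eq_sirConfig_preimage {X Y : ℕ → Ω → ℕ} (hX : ∀ i ω, X i ω ≤ 1)
    (hY : ∀ i ω, Y i ω ≤ 1) (c : Fin N → Bool × Bool) :
    {ω | ∀ i < N, X i ω = bitSeq (fun j => (c j).1) i ∧ Y i ω = bitSeq (fun j => (c j).2) i}
      = sirConfig N X Y ⁻¹' {c} := by
  ext ω
  simp only [Set.mem_ofPred_eq, Set.mem_preimage, Set.mem_singleton_iff, funext_iff,
    Prod.ext_iff, sirConfig, Fin.forall_iff]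
  refine forall₂_congr fun i hi => ?_
  simp only [bitSeq, hi, dif_pos, eq_toNat_iff_decide_eq (hX i ω),
    eq_toNat_iff_decide_eq (hY i ω)]

theorem measurable_sirConfig [MeasurableSpace Ω] {X Y : ℕ → Ω → ℕ}
    (hX : ∀ i, Measurable (X i)) (hY : ∀ i, Measurable (Y i)) :
    Measurable (sirConfig N X Y) :=
  measurable_pi_lambda _ fun j =>
    ((measurable_of_countable fun n : ℕ => decide (n = 1)).comp (hX j)).prodMk
      ((measurable_of_countable fun n : ℕ => decide (n = 1)).comp (hY j))

-- The law of `(X_j = 1, Y_j = 1)`, with `e` and `f` the probabilities of escaping infection and of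
-- not recovering.
def pairWeight (e f : ℝ) (v : Bool × Bool) : ℝ :=
  (if v.1 then 1 - e else e) * (if v.2 then 1 - f else f)

theorem sum_pairWeight (e f : ℝ) : ∑ v, pairWeight e f v = 1 := by
  simp only [pairWeight, Fintype.sum_prod_type, Fintype.sum_bool, Bool.false_eq_true, ↓reduceIte]
  ring

-- Individual `j` counts in `I_{k+1}` if it is among the `i` infectious and does not recover,
-- or among the `s` susceptible and gets infected.
def infectiousContribution (s i : ℕ) (j : Fin N) (v : Bool × Bool) : ℝ :=
  (if (j : ℕ) < i then 1 - (v.2.toNat : ℝ) else 0) + (if (j : ℕ) < s then (v.1.toNat : ℝ) else 0)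

theorem weightedVar_pairWeight_infectiousContribution (e f : ℝ) (s i : ℕ) (j : Fin N) :
    weightedVar (pairWeight e f) (infectiousContribution s i j)
      = (if (j : ℕ) < s then (1 - e) * e else 0) + (if (j : ℕ) < i then (1 - f) * f else 0) := by
  simp only [weightedVar, infectiousContribution, pairWeight, Fintype.sum_prod_type,
    Fintype.sum_bool, Bool.toNat_true, Bool.toNat_false, Nat.cast_one, Nat.cast_zero,
    Bool.false_eq_true, ↓reduceIte]
  split_ifs <;> ring

theorem sum_weightedVar_infectiousContribution {s i : ℕ} (hs : s ≤ N) (hi : i ≤ N)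
    (e f : ℝ) :
    ∑ j : Fin N, weightedVar (pairWeight e f) (infectiousContribution s i j)
      = s * (1 - e) * e + i * (1 - f) * f := by
  simp only [weightedVar_pairWeight_infectiousContribution, Finset.sum_add_distrib,
    sum_fin_ite_lt_const hs, sum_fin_ite_lt_const hi]
  ring

end Configurations

namespace IsSIRModel

variable {Ω : Type*} [MeasurableSpace Ω] {μ : Measure Ω} {N : ℕ} {h lam gam : ℝ}
  {S I R : ℕ → Ω → ℕ} {X Y : ℕ → ℕ → Ω → ℕ}

theorem S_le (hM : IsSIRModel μ N h lam gam S I R X Y) (k : ℕ) (ω : Ω) : S k ω ≤ N := by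
  have := hM.2.2.2.2.1 k ω
  omega

theorem I_le (hM : IsSIRModel μ N h lam gam S I R X Y) (k : ℕ) (ω : Ω) : I k ω ≤ N := by
  have := hM.2.2.2.2.1 k ω
  omega

theorem natCast_I_succ (hM : IsSIRModel μ N h lam gam S I R X Y) (k : ℕ) (ω : Ω) :
    (I (k + 1) ω : ℝ)
      = ∑ j, infectiousContribution (S k ω) (I k ω) j (sirConfig N (X k) (Y k) ω j) := by
  have hS := hM.S_le k ω
  have hI := hM.I_le k ω
  obtain ⟨-, -, -, -, -, hX, hY, -, -, -, -, -, -, -, hrec, -⟩ := hM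
  have hbit : ∀ n : ℕ, n ≤ 1 → ((decide (n = 1)).toNat : ℝ) = n := fun n hn => by
    exact_mod_cast ((eq_toNat_iff_decide_eq hn _).2 rfl).symm
  have hIsum : (I k ω : ℝ) = ∑ j : Fin N, if (j : ℕ) < I k ω then 1 else 0 := by
    rw [sum_fin_ite_lt_const hI, mul_one]
  have hcast := congrArg (Nat.cast : ℕ → ℝ) (hrec k ω)
  push_cast at hcast
  rw [sum_range_eq_sum_fin_ite hI, sum_range_eq_sum_fin_ite hS] at hcast
  rw [eq_sub_of_add_eq hcast, hIsum, ← Finset.sum_add_distrib, ← Finset.sum_sub_distrib]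
  refine Finset.sum_congr rfl fun j _ => ?_
  simp only [infectiousContribution, sirConfig, hbit _ (hX k j ω), hbit _ (hY k j ω)]
  split_ifs <;> ring

theorem condExp_indicator_sirConfig (hM : IsSIRModel μ N h lam gam S I R X Y) (k : ℕ)
    (c : Fin N → Bool × Bool) :
    μ[(sirConfig N (X k) (Y k) ⁻¹' {c}).indicator 1 | sirFiltration S I k]
      =ᵐ[μ] fun ω => ∏ j, pairWeight (exp (-(lam * I k ω * h))) (exp (-(gam * h))) (c j) := by
  obtain ⟨-, -, -, -, -, hX, hY, -, -, -, -, -, -, -, -, -, hcond⟩ := hM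
  have hc := hcond k (bitSeq fun j => (c j).1) (bitSeq fun j => (c j).2) (bitSeq_le_one _)
    (bitSeq_le_one _)
  rw [setOf_eq_sirConfig_preimage (hX k) (hY k)] at hc
  refine hc.trans (ae_of_all _ fun ω => ?_)
  simp only [pairWeight, Finset.prod_mul_distrib, ← Fin.prod_univ_eq_prod_range, bitSeq,
    Fin.is_lt, dif_pos]
  simp

theorem condExp_comp_I_succ (hM : IsSIRModel μ N h lam gam S I R X Y) (k : ℕ) (g : ℝ → ℝ) :
    μ[fun ω => g (I (k + 1) ω) | sirFiltration S I k]
      =ᵐ[μ] fun ω => piExpect (pairWeight (exp (-(lam * I k ω * h))) (exp (-(gam * h))))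
        fun c : Fin N → Bool × Bool => g (∑ j, infectiousContribution (S k ω) (I k ω) j (c j)) := by
  have := hM.1
  have hIle := hM.I_le (k + 1)
  have hIsucc := hM.natCast_I_succ k
  have hweight := fun c => hM.condExp_indicator_sirConfig k c
  obtain ⟨-, -, -, -, -, -, -, -, hI, -, hX, hY, -⟩ := hM
  have hH : ∀ c : Fin N → Bool × Bool, StronglyMeasurable[sirFiltration S I k]
      fun ω => g (∑ j, infectiousContribution (S k ω) (I k ω) j (c j)) := fun c =>
    ((measurable_of_countable fun p : ℕ × ℕ =>
      g (∑ j, infectiousContribution p.1 p.2 j (c j))).comp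
        (measurable_pair_sirFiltration S I k)).stronglyMeasurable
  have hZ : Integrable (fun ω => g (I (k + 1) ω)) μ :=
    integrable_comp_of_forall_le (hI (k + 1)) hIle fun n => g n
  filter_upwards [condExp_eq_sum_mul_condExp_indicator (measurable_sirConfig (hX k) (hY k)) hH hZ
      (fun ω => by rw [hIsucc]), ae_all_iff.2 hweight] with ω hsum hprod
  simp only [hsum, hprod, piExpect]

end IsSIRModel

/-- In the discrete stochastic SIR model, for every `k`, the conditional
variance `Var(I_{k+1} | 𝓕_k) := 𝔼[I_{k+1}² | 𝓕_k] - (𝔼[I_{k+1} | 𝓕_k])²` satisfies, a.s.,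
`Var(I_{k+1} | 𝓕_k) = S_k (1 - e^{-λ I_k h}) e^{-λ I_k h} + I_k (1 - e^{-γh}) e^{-γh}`. -/
theorem sir_cond_variance_one_step
    {Ω : Type*} [MeasurableSpace Ω] (μ : Measure Ω)
    (N : ℕ) (h lam gam : ℝ)
    (S I R : ℕ → Ω → ℕ) (X Y : ℕ → ℕ → Ω → ℕ)
    (hM : IsSIRModel μ N h lam gam S I R X Y) :
    ∀ k : ℕ,
      (fun ω =>
          (μ[fun ω' => ((I (k + 1) ω' : ℝ)) ^ 2 | sirFiltration S I k]) ω
            - ((μ[fun ω' => (I (k + 1) ω' : ℝ) | sirFiltration S I k]) ω) ^ 2)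
        =ᵐ[μ] fun ω =>
          (S k ω : ℝ) * (1 - Real.exp (-(lam * (I k ω : ℝ) * h)))
              * Real.exp (-(lam * (I k ω : ℝ) * h))
            + (I k ω : ℝ) * (1 - Real.exp (-(gam * h))) * Real.exp (-(gam * h)) := by
  intro k
  filter_upwards [hM.condExp_comp_I_succ k (· ^ 2), hM.condExp_comp_I_succ k fun x => x]
    with ω hsq hmean
  rw [hsq, hmean, piExpect_sq_sub_sq_eq_sum_weightedVar _ (sum_pairWeight _ _),
    sum_weightedVar_infectiousContribution (hM.S_le k ω) (hM.I_le k ω)]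
end

section
/- Fix λ, γ > 0 and N ≥ 1, and define forecast_{λ,h}(x, y) = (x·e^{−λyh}, x·(1 − e^{−λyh}) + y·e^{−γh}) for h > 0. Then there exists a constant C > 0 (depending only on λ, γ and N) such that for all h ∈ (0, 1], all integers k ≥ 1 and all (x, y) ∈ [0, N]², ‖forecast_{λ,h}(x, y) − (forecast_{λ,h/k})^{(k)}(x, y)‖_∞ ≤ C·h²; that is, a single step of length h agrees with k successive steps of length h/k up to an error O(h²) uniform in k. -/
/-! The triangle `0 ≤ x`, `0 ≤ y`, `x + y ≤ M` is invariant under every step, since the total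
population `x + y` never increases. On it a step of length `s` is Lipschitz with constant
`1 + 2λMs`, and a step of length `t` followed by one of length `s` differs from a single step
of length `t + s` by `O(t s)`. Telescoping over the `k` steps (Lady Windermere's fan), each
defect amplified by at most `(1 + 2λMs)ᵏ ≤ exp (2λM h)`, bounds the total error by a
constant times `exp (2λM h) h²` when `h = k s`. -/

open Real

/-- The one-step forecast function of the discrete SIR model:
`forecast_{λ,h}(x, y) = (x e^{-λyh}, x (1 - e^{-λyh}) + y e^{-γh})`, the first coordinate
being the susceptible count and the second the infectious count. -/
noncomputable def forecast (lam gam h : ℝ) : ℝ × ℝ → ℝ × ℝ :=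
  fun p =>
    (p.1 * exp (-(lam * p.2 * h)),
      p.1 * (1 - exp (-(lam * p.2 * h))) + p.2 * exp (-(gam * h)))

open Set

lemma abs_exp_neg_sub_exp_neg_le {a b : ℝ} (ha : 0 ≤ a) (hb : 0 ≤ b) :
    |exp (-a) - exp (-b)| ≤ |a - b| := by
  wlog hab : a ≤ b generalizing a b
  · rw [abs_sub_comm, abs_sub_comm a]
    exact this hb ha (le_of_not_ge hab)
  have hsplit : exp (-a) - exp (-b) = exp (-a) * (1 - exp (-(b - a))) := by
    rw [mul_sub, mul_one, ← exp_add]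
    ring_nf
  have hgap : 0 ≤ 1 - exp (-(b - a)) := by
    rw [sub_nonneg, exp_le_one_iff]
    linarith
  rw [hsplit, abs_of_nonneg (mul_nonneg (exp_pos _).le hgap), abs_sub_comm,
    abs_of_nonneg (sub_nonneg.2 hab)]
  calc exp (-a) * (1 - exp (-(b - a))) ≤ 1 * (b - a) :=
        mul_le_mul (exp_le_one_iff.2 (by linarith)) (by linarith [one_sub_le_exp_neg (b - a)])
          hgap zero_le_one
    _ = b - a := one_mul _

theorem norm_apply_mul_sub_iterate_le {E : Type*} [SeminormedAddCommGroup E]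
    {F : ℝ → E → E} {S : Set E} {K L s : ℝ} (hK : 0 ≤ K) (hL : 0 ≤ L) (hs : 0 ≤ s)
    (hF0 : ∀ p ∈ S, F 0 p = p) (hmaps : ∀ t, 0 ≤ t → MapsTo (F t) S S)
    (hlip : ∀ p ∈ S, ∀ q ∈ S, ‖F s p - F s q‖ ≤ (1 + L * s) * ‖p - q‖)
    (hsplit : ∀ t, 0 ≤ t → ∀ p ∈ S, ‖F (t + s) p - F s (F t p)‖ ≤ K * t * s)
    {p : E} (hp : p ∈ S) (n : ℕ) :
    ‖F (n * s) p - (F s)^[n] p‖ ≤ K * exp (L * (n * s)) * (n * s) ^ 2 := by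
  induction n with
  | zero => simp [hF0 p hp]
  | succ n ih =>
    have hns : 0 ≤ (n : ℝ) * s := by positivity
    have hstep : 1 + L * s ≤ exp (L * s) := by linarith [add_one_le_exp (L * s)]
    have hgrowth : 1 ≤ exp (L * (n * s)) := one_le_exp (by positivity)
    have hexp : exp (L * ((n + 1 : ℕ) * s)) = exp (L * s) * exp (L * (n * s)) := by
      rw [← exp_add]; push_cast; ring_nf
    calc ‖F ((n + 1 : ℕ) * s) p - (F s)^[n + 1] p‖
        = ‖(F (n * s + s) p - F s (F (n * s) p))
            + (F s (F (n * s) p) - F s ((F s)^[n] p))‖ := by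
          rw [Function.iterate_succ_apply', sub_add_sub_cancel]; push_cast; ring_nf
      _ ≤ K * (n * s) * s + (1 + L * s) * (K * exp (L * (n * s)) * (n * s) ^ 2) :=
          norm_add_le_of_le (hsplit _ hns p hp)
            ((hlip _ (hmaps _ hns hp) _ ((hmaps s hs).iterate n hp)).trans
              (mul_le_mul_of_nonneg_left ih (by positivity)))
      _ ≤ K * exp (L * ((n + 1 : ℕ) * s)) * ((n + 1 : ℕ) * s) ^ 2 := by
          have hAB : 1 ≤ exp (L * s) * exp (L * (n * s)) := by nlinarith [exp_pos (L * s)]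
          have hKts : 0 ≤ K * ((n : ℝ) * s) * s := by positivity
          rw [hexp]; push_cast
          nlinarith [mul_le_mul_of_nonneg_right hstep
              (by positivity : 0 ≤ K * exp (L * (n * s)) * ((n : ℝ) * s) ^ 2),
            mul_le_mul_of_nonneg_right hAB hKts,
            mul_nonneg (mul_nonneg hK (zero_le_one.trans hAB)) (mul_nonneg hns hs),
            mul_nonneg (mul_nonneg hK (zero_le_one.trans hAB)) (sq_nonneg s)]

noncomputable def newInfections (lam h : ℝ) (p : ℝ × ℝ) : ℝ :=
  p.1 * (1 - exp (-(lam * p.2 * h)))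

def sirSimplex (M : ℝ) : Set (ℝ × ℝ) :=
  {p | 0 ≤ p.1 ∧ 0 ≤ p.2 ∧ p.1 + p.2 ≤ M}

lemma forecast_eq (lam gam h : ℝ) (p : ℝ × ℝ) :
    forecast lam gam h p =
      (p.1 - newInfections lam h p, p.2 * exp (-(gam * h)) + newInfections lam h p) := by
  ext <;> simp only [forecast, newInfections] <;> ring

lemma forecast_zero (lam gam : ℝ) (p : ℝ × ℝ) : forecast lam gam 0 p = p := by
  simp [forecast]

section

variable {lam gam h M : ℝ} {p q : ℝ × ℝ}

lemma sirSimplex.fst_le (hp : p ∈ sirSimplex M) : p.1 ≤ M := by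
  linarith [hp.2.1, hp.2.2]

lemma sirSimplex.snd_le (hp : p ∈ sirSimplex M) : p.2 ≤ M := by
  linarith [hp.1, hp.2.2]

lemma newInfections_nonneg (hlam : 0 ≤ lam) (hh : 0 ≤ h) (hp : p ∈ sirSimplex M) :
    0 ≤ newInfections lam h p :=
  mul_nonneg hp.1 (sub_nonneg.2 (exp_le_one_iff.2 (by nlinarith [mul_nonneg hlam hp.2.1])))

lemma newInfections_le_fst (hp : p ∈ sirSimplex M) : newInfections lam h p ≤ p.1 := by
  unfold newInfections
  nlinarith [hp.1, exp_pos (-(lam * p.2 * h))]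

lemma newInfections_le (hlam : 0 ≤ lam) (hh : 0 ≤ h) (hp : p ∈ sirSimplex M) :
    newInfections lam h p ≤ lam * M ^ 2 * h := by
  have hxy : p.1 * p.2 ≤ M ^ 2 := by
    rw [sq]
    exact mul_le_mul (sirSimplex.fst_le hp) (sirSimplex.snd_le hp) hp.2.1
      (hp.1.trans (sirSimplex.fst_le hp))
  unfold newInfections
  nlinarith [hp.1, one_sub_le_exp_neg (lam * p.2 * h), mul_le_mul_of_nonneg_left hxy
    (mul_nonneg hlam hh)]

lemma mapsTo_forecast (hlam : 0 ≤ lam) (hgam : 0 ≤ gam) (hh : 0 ≤ h) :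
    MapsTo (forecast lam gam h) (sirSimplex M) (sirSimplex M) := by
  intro p hp
  have hI := newInfections_nonneg hlam hh hp
  have hG : exp (-(gam * h)) ≤ 1 := exp_le_one_iff.2 (by nlinarith)
  rw [forecast_eq]
  refine ⟨by linarith [newInfections_le_fst (lam := lam) (h := h) hp],
    add_nonneg (mul_nonneg hp.2.1 (exp_pos _).le) hI, ?_⟩
  linarith [mul_le_mul_of_nonneg_left hG hp.2.1, hp.2.2]

lemma abs_newInfections_sub_le (hlam : 0 ≤ lam) (hh : 0 ≤ h)
    (hp : p ∈ sirSimplex M) (hq : q ∈ sirSimplex M) :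
    |newInfections lam h p - newInfections lam h q| ≤ 2 * lam * M * h * ‖p - q‖ := by
  have hx : |p.1 - q.1| ≤ ‖p - q‖ := norm_fst_le (p - q)
  have hy : |p.2 - q.2| ≤ ‖p - q‖ := norm_snd_le (p - q)
  have hrate : |1 - exp (-(lam * p.2 * h))| ≤ lam * M * h := by
    rw [abs_of_nonneg (sub_nonneg.2 (exp_le_one_iff.2 (by nlinarith [mul_nonneg hlam hp.2.1])))]
    nlinarith [one_sub_le_exp_neg (lam * p.2 * h), sirSimplex.snd_le hp, mul_nonneg hlam hh]
  have hexp : |exp (-(lam * q.2 * h)) - exp (-(lam * p.2 * h))| ≤ lam * h * ‖p - q‖ := by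
    calc _ ≤ |lam * q.2 * h - lam * p.2 * h| :=
          abs_exp_neg_sub_exp_neg_le (by positivity [hq.2.1]) (by positivity [hp.2.1])
      _ = lam * h * |p.2 - q.2| := by
          rw [← abs_of_nonneg (mul_nonneg hlam hh), ← abs_mul, abs_sub_comm]; ring_nf
      _ ≤ lam * h * ‖p - q‖ := mul_le_mul_of_nonneg_left hy (mul_nonneg hlam hh)
  calc |newInfections lam h p - newInfections lam h q|
      = |(p.1 - q.1) * (1 - exp (-(lam * p.2 * h)))
          + q.1 * (exp (-(lam * q.2 * h)) - exp (-(lam * p.2 * h)))| := by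
        unfold newInfections; ring_nf
    _ ≤ ‖p - q‖ * (lam * M * h) + M * (lam * h * ‖p - q‖) := by
        refine (abs_add_le _ _).trans (add_le_add ?_ ?_) <;> rw [abs_mul]
        · exact mul_le_mul hx hrate (abs_nonneg _) (norm_nonneg _)
        · rw [abs_of_nonneg hq.1]
          exact mul_le_mul (sirSimplex.fst_le hq) hexp (abs_nonneg _)
            (hq.1.trans (sirSimplex.fst_le hq))
    _ = 2 * lam * M * h * ‖p - q‖ := by ring

lemma norm_forecast_sub_forecast_le (hlam : 0 ≤ lam) (hgam : 0 ≤ gam) (hh : 0 ≤ h)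
    (hp : p ∈ sirSimplex M) (hq : q ∈ sirSimplex M) :
    ‖forecast lam gam h p - forecast lam gam h q‖ ≤ (1 + 2 * lam * M * h) * ‖p - q‖ := by
  have hI := abs_newInfections_sub_le hlam hh hp hq
  have hx : |p.1 - q.1| ≤ ‖p - q‖ := norm_fst_le (p - q)
  have hy : |p.2 - q.2| ≤ ‖p - q‖ := norm_snd_le (p - q)
  have hG : |exp (-(gam * h))| ≤ 1 := by
    rw [abs_of_pos (exp_pos _), exp_le_one_iff]; nlinarith
  rw [norm_prod_le_iff, forecast_eq, forecast_eq]
  simp only [Prod.fst_sub, Prod.snd_sub, Real.norm_eq_abs]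
  constructor
  · calc _ = |(p.1 - q.1) - (newInfections lam h p - newInfections lam h q)| := by ring_nf
      _ ≤ _ := (abs_sub _ _).trans (by linarith)
  · calc _ = |(p.2 - q.2) * exp (-(gam * h))
          + (newInfections lam h p - newInfections lam h q)| := by ring_nf
      _ ≤ _ := (abs_add_le _ _).trans (by rw [abs_mul]; nlinarith [abs_nonneg (p.2 - q.2)])

lemma forecast_add_sub_forecast_forecast_fst (a b : ℝ) (p : ℝ × ℝ) :
    (forecast lam gam (a + b) p - forecast lam gam b (forecast lam gam a p)).1 =
      p.1 * exp (-(lam * p.2 * a)) *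
        (exp (-(lam * p.2 * b)) - exp (-(lam * (forecast lam gam a p).2 * b))) := by
  simp only [Prod.fst_sub, forecast, mul_add, neg_add, exp_add]
  ring

lemma forecast_add_sub_forecast_forecast_snd (a b : ℝ) (p : ℝ × ℝ) :
    (forecast lam gam (a + b) p - forecast lam gam b (forecast lam gam a p)).2 =
      newInfections lam a p * (1 - exp (-(gam * b))) -
        (forecast lam gam (a + b) p - forecast lam gam b (forecast lam gam a p)).1 := by
  simp only [Prod.fst_sub, Prod.snd_sub, forecast, newInfections, mul_add, neg_add, exp_add]
  ring

lemma abs_forecast_snd_sub_le (hlam : 0 ≤ lam) (hgam : 0 ≤ gam) (hh : 0 ≤ h)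
    (hp : p ∈ sirSimplex M) :
    |(forecast lam gam h p).2 - p.2| ≤ M * (lam * M + gam) * h := by
  have hI := newInfections_le hlam hh hp
  have hrecovered : 0 ≤ p.2 * (1 - exp (-(gam * h))) :=
    mul_nonneg hp.2.1 (sub_nonneg.2 (exp_le_one_iff.2 (by nlinarith)))
  have hrecovered_le : p.2 * (1 - exp (-(gam * h))) ≤ M * gam * h := by
    nlinarith [one_sub_le_exp_neg (gam * h), sirSimplex.snd_le hp, hp.2.1, mul_nonneg hgam hh]
  calc |(forecast lam gam h p).2 - p.2|
      = |newInfections lam h p - p.2 * (1 - exp (-(gam * h)))| := by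
        rw [forecast_eq]; ring_nf
    _ ≤ newInfections lam h p + p.2 * (1 - exp (-(gam * h))) := by
        rw [abs_sub_le_iff]; constructor <;> linarith [newInfections_nonneg hlam hh hp]
    _ ≤ M * (lam * M + gam) * h := by linarith

lemma norm_forecast_add_sub_forecast_forecast_le (hlam : 0 ≤ lam) (hgam : 0 ≤ gam)
    {a b : ℝ} (ha : 0 ≤ a) (hb : 0 ≤ b) (hp : p ∈ sirSimplex M) :
    ‖forecast lam gam (a + b) p - forecast lam gam b (forecast lam gam a p)‖ ≤
      lam * M ^ 2 * (lam * M + 2 * gam) * a * b := by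
  have hM : 0 ≤ M := hp.1.trans (sirSimplex.fst_le hp)
  have hfst : |(forecast lam gam (a + b) p - forecast lam gam b (forecast lam gam a p)).1| ≤
      lam * M ^ 2 * (lam * M + gam) * a * b := by
    have hS : p.1 * exp (-(lam * p.2 * a)) ≤ M :=
      (mul_le_of_le_one_right hp.1
        (exp_le_one_iff.2 (by nlinarith [mul_nonneg hlam hp.2.1]))).trans (sirSimplex.fst_le hp)
    have hI : |exp (-(lam * p.2 * b)) - exp (-(lam * (forecast lam gam a p).2 * b))| ≤
        lam * b * (M * (lam * M + gam) * a) := by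
      calc _ ≤ |lam * p.2 * b - lam * (forecast lam gam a p).2 * b| :=
            abs_exp_neg_sub_exp_neg_le (by positivity [hp.2.1])
              (by positivity [(mapsTo_forecast hlam hgam ha hp).2.1])
        _ = lam * b * |(forecast lam gam a p).2 - p.2| := by
            rw [← abs_of_nonneg (mul_nonneg hlam hb), ← abs_mul, abs_sub_comm]; ring_nf
        _ ≤ _ := mul_le_mul_of_nonneg_left (abs_forecast_snd_sub_le hlam hgam ha hp)
            (mul_nonneg hlam hb)
    rw [forecast_add_sub_forecast_forecast_fst, abs_mul, abs_of_nonneg (by positivity [hp.1])]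
    calc _ ≤ M * (lam * b * (M * (lam * M + gam) * a)) :=
          mul_le_mul hS hI (abs_nonneg _) hM
      _ = _ := by ring
  have hsnd : newInfections lam a p * (1 - exp (-(gam * b))) ≤ lam * M ^ 2 * a * (gam * b) :=
    mul_le_mul (newInfections_le hlam ha hp) (by linarith [one_sub_le_exp_neg (gam * b)])
      (sub_nonneg.2 (exp_le_one_iff.2 (by nlinarith))) (by positivity)
  have hsnd0 : 0 ≤ newInfections lam a p * (1 - exp (-(gam * b))) :=
    mul_nonneg (newInfections_nonneg hlam ha hp) (sub_nonneg.2 (exp_le_one_iff.2 (by nlinarith)))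
  have hab : 0 ≤ lam * gam * M ^ 2 * a * b := by positivity
  rw [norm_prod_le_iff, Real.norm_eq_abs, Real.norm_eq_abs,
    forecast_add_sub_forecast_forecast_snd]
  constructor
  · linarith
  · refine (abs_sub _ _).trans ?_
    rw [abs_of_nonneg hsnd0]
    linarith

end

/-- Fix `λ, γ > 0` and `N ≥ 1`.  There is a constant `C > 0` (depending only
on `λ`, `γ` and `N`) such that for all `h ∈ (0, 1]`, all `k ≥ 1` and all `(x, y) ∈ [0, N]²`,
`‖forecast_{λ,h}(x, y) - (forecast_{λ,h/k})^{(k)}(x, y)‖_∞ ≤ C h²`: a single step of length `h`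
agrees with `k` successive steps of length `h/k` up to an error `O(h²)` uniform in `k`. -/
theorem forecast_rescaling
    (lam gam : ℝ) (hlam : 0 < lam) (hgam : 0 < gam)
    (N : ℝ) (hN : 1 ≤ N) :
    ∃ C : ℝ, 0 < C ∧
      ∀ h : ℝ, 0 < h → h ≤ 1 →
        ∀ k : ℕ, 1 ≤ k →
          ∀ x y : ℝ, 0 ≤ x → x ≤ N → 0 ≤ y → y ≤ N →
            |(forecast lam gam h (x, y)).1
                - ((forecast lam gam (h / k))^[k] (x, y)).1| ≤ C * h ^ 2 ∧
            |(forecast lam gam h (x, y)).2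
                - ((forecast lam gam (h / k))^[k] (x, y)).2| ≤ C * h ^ 2 := by
  set M := 2 * N
  have hM : 0 < M := by positivity
  set K := lam * M ^ 2 * (lam * M + 2 * gam)
  set L := 2 * lam * M
  refine ⟨K * exp L, by positivity, fun h hh0 hh1 k hk x y hx hxN hy hyN => ?_⟩
  have hs : 0 ≤ h / k := by positivity
  have hks : (k : ℝ) * (h / k) = h := mul_div_cancel₀ h (by positivity)
  have hp : (x, y) ∈ sirSimplex M := ⟨hx, hy, by dsimp only; linarith⟩
  have herr := norm_apply_mul_sub_iterate_le (F := forecast lam gam) (by positivity)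
    (by positivity) hs (fun p _ => forecast_zero lam gam p)
    (fun _ ht => mapsTo_forecast hlam.le hgam.le ht)
    (fun _ hp _ hq => norm_forecast_sub_forecast_le hlam.le hgam.le hs hp hq)
    (fun _ ht _ hp => norm_forecast_add_sub_forecast_forecast_le hlam.le hgam.le ht hs hp) hp k
  rw [hks] at herr
  have hbound : K * exp (L * h) * h ^ 2 ≤ K * exp L * h ^ 2 := by
    gcongr
    exact mul_le_of_le_one_right (by positivity) hh1
  have hnorm := herr.trans hbound
  exact ⟨(norm_fst_le _).trans hnorm, (norm_snd_le _).trans hnorm⟩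
end
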